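/- Let (X,f) and (Y,g) be BTDSs, where (X,τ1,τ2) and (Y,ψ1,ψ2) are bitopological spaces, and suppose f ≈^H_F g via a BTDS-homotopy H. If (Y,ψ1,ψ2) is a pairwise T3, pairwise locally compact, pairwise P-space, then Y has the H-Menger property if and only if Y has the H-weak Menger property. -/

import Mathlib

open Set Topology

universe u v w

/-- A map between bitopological spaces is pairwise continuous if it is continuous
with respect to the first topologies and with respect to the second topologies. -/
def PairwiseContinuous {X : Type u} {Y : Type v}
    (t1 t2 : TopologicalSpace X) (s1 s2 : TopologicalSpace Y) (f : X → Y) : Prop :=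
  Continuous[t1, s1] f ∧ Continuous[t2, s2] f

/-- The product topology on `X × [0,1]` where `X` carries `t` and `[0,1]` the usual topology. -/
def prodI {X : Type u} (t : TopologicalSpace X) : TopologicalSpace (X × unitInterval) :=
  @instTopologicalSpaceProd X unitInterval t inferInstance

/-- A BTDS-homotopy between `f` and `g` relative to `F`:
a pairwise continuous `H : X × [0,1] → Y` with `H(x,0) = F(f x)` and `H(x,1) = g(F x)`. -/
def IsBTDSHomotopy {X : Type u} {Y : Type v}
    (t1 t2 : TopologicalSpace X) (s1 s2 : TopologicalSpace Y)
    (f : X → X) (g : Y → Y) (F : X → Y) (H : X × unitInterval → Y) : Prop :=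
  PairwiseContinuous (prodI t1) (prodI t2) s1 s2 H ∧
    (∀ x, H (x, 0) = F (f x)) ∧ (∀ x, H (x, 1) = g (F x))

/-- A BTDS-iteration homotopy between `f` and `g` relative to `F`. -/
def IsBTDSIterHomotopy {X : Type u} {Y : Type v}
    (t1 t2 : TopologicalSpace X) (s1 s2 : TopologicalSpace Y)
    (f : X → X) (g : Y → Y) (F : X → Y) (H : X × unitInterval → Y) : Prop :=
  PairwiseContinuous (prodI t1) (prodI t2) s1 s2 H ∧
    (∀ (x : X) (n : ℕ), H (f^[n + 1] x, 0) = F (f (f^[n] x))) ∧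
    (∀ (x : X) (n : ℕ), H (f^[n + 1] x, 1) = g (F (f^[n] x)))

/-- A bitopological path in `(X, s1, s2)` from `x` to `y`. -/
def IsBitopPath {X : Type u} (s1 s2 : TopologicalSpace X)
    (F : unitInterval → X) (x y : X) : Prop :=
  PairwiseContinuous inferInstance inferInstance s1 s2 F ∧ F 0 = x ∧ F 1 = y

/-- A BTDS-path homotopy between `f` and `g` relative to the bitopological path `F`
from `x` to `y`. -/
def IsBTDSPathHomotopy {X : Type u} (s1 s2 : TopologicalSpace X)
    (f : unitInterval → unitInterval) (g : X → X) (F : unitInterval → X) (x y : X)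
    (H : unitInterval × unitInterval → X) : Prop :=
  PairwiseContinuous inferInstance inferInstance s1 s2 H ∧
    (∀ m : unitInterval, 0 < (m : ℝ) → (m : ℝ) < 1 →
      H (m, 0) = F (f m) ∧ H (m, 1) = g (F m)) ∧
    (∀ n : unitInterval, H (0, n) = x ∧ H (1, n) = y)

/-- `𝒪_i`: the collection of all open covers w.r.t. the topology `s`. -/
def OpenCovers {Y : Type v} (s : TopologicalSpace Y) : Set (Set (Set Y)) :=
  {𝒰 | (∀ U ∈ 𝒰, IsOpen[s] U) ∧ ⋃₀ 𝒰 = univ}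

/-- `𝒪^D_{ij}`: families of `si`-open sets whose union is `sj`-dense. -/
def DenseFamilies {Y : Type v} (si sj : TopologicalSpace Y) : Set (Set (Set Y)) :=
  {𝒰 | (∀ U ∈ 𝒰, IsOpen[si] U) ∧ @closure Y sj (⋃₀ 𝒰) = univ}

/-- `𝒪̄_{ij}`: families of `si`-open sets whose `sj`-closures cover `Y`. -/
def ClosureCovers {Y : Type v} (si sj : TopologicalSpace Y) : Set (Set (Set Y)) :=
  {𝒰 | (∀ U ∈ 𝒰, IsOpen[si] U) ∧ (⋃ U ∈ 𝒰, @closure Y sj U) = univ}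

/-- `S_1^H(𝒜, ℬ)` relative to the homotopy `H`. -/
def S1H {X : Type u} {Y : Type v} (H : X × unitInterval → Y)
    (A B : Set (Set (Set Y))) : Prop :=
  ∀ 𝒰 : ℕ → Set (Set Y), (∀ n, 𝒰 n ∈ A) →
    ∀ x : X, (∀ n, H (x, 0) ∈ ⋃₀ 𝒰 n) →
      ∃ U : ℕ → Set Y, (∀ n, U n ∈ 𝒰 n) ∧ (∀ n, H (x, 1) ∈ U n) ∧ Set.range U ∈ B

/-- `S_fin^H(𝒜, ℬ)` relative to the homotopy `H`. -/
def SfinH {X : Type u} {Y : Type v} (H : X × unitInterval → Y)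
    (A B : Set (Set (Set Y))) : Prop :=
  ∀ 𝒰 : ℕ → Set (Set Y), (∀ n, 𝒰 n ∈ A) →
    ∀ x : X, (∀ n, H (x, 0) ∈ ⋃₀ 𝒰 n) →
      ∃ 𝒱 : ℕ → Set (Set Y), (∀ n, (𝒱 n).Finite ∧ 𝒱 n ⊆ 𝒰 n) ∧
        (∀ n, H (x, 1) ∈ ⋃₀ 𝒱 n) ∧ (⋃ n, 𝒱 n) ∈ B

/-- `S_1^PH(𝒜, ℬ)` relative to the path homotopy `H`. -/
def S1PH {X : Type u} (H : unitInterval × unitInterval → X)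
    (A B : Set (Set (Set X))) : Prop :=
  ∀ 𝒰 : ℕ → Set (Set X), (∀ n, 𝒰 n ∈ A) →
    ∀ m : unitInterval, 0 < (m : ℝ) → (m : ℝ) < 1 → (∀ n, H (m, 0) ∈ ⋃₀ 𝒰 n) →
      ∃ U : ℕ → Set X, (∀ n, U n ∈ 𝒰 n) ∧ (∀ n, H (m, 1) ∈ U n) ∧ Set.range U ∈ B

/-- `S_fin^PH(𝒜, ℬ)` relative to the path homotopy `H`. -/
def SfinPH {X : Type u} (H : unitInterval × unitInterval → X)
    (A B : Set (Set (Set X))) : Prop :=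
  ∀ 𝒰 : ℕ → Set (Set X), (∀ n, 𝒰 n ∈ A) →
    ∀ m : unitInterval, 0 < (m : ℝ) → (m : ℝ) < 1 → (∀ n, H (m, 0) ∈ ⋃₀ 𝒰 n) →
      ∃ 𝒱 : ℕ → Set (Set X), (∀ n, (𝒱 n).Finite ∧ 𝒱 n ⊆ 𝒰 n) ∧
        (∀ n, H (m, 1) ∈ ⋃₀ 𝒱 n) ∧ (⋃ n, 𝒱 n) ∈ B

/-- `Y` has the H-Rothberger property (both the (1,2) and the (2,1) versions). -/
def HRothberger {X : Type u} {Y : Type v} (H : X × unitInterval → Y)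
    (s1 s2 : TopologicalSpace Y) : Prop :=
  S1H H (OpenCovers s1) (OpenCovers s2) ∧ S1H H (OpenCovers s2) (OpenCovers s1)

/-- `Y` has the H-almost Rothberger property. -/
def HAlmostRothberger {X : Type u} {Y : Type v} (H : X × unitInterval → Y)
    (s1 s2 : TopologicalSpace Y) : Prop :=
  S1H H (OpenCovers s1) (ClosureCovers s1 s2) ∧ S1H H (OpenCovers s2) (ClosureCovers s2 s1)

/-- `Y` has the H-weak Rothberger property. -/
def HWeakRothberger {X : Type u} {Y : Type v} (H : X × unitInterval → Y)
    (s1 s2 : TopologicalSpace Y) : Prop :=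
  S1H H (OpenCovers s1) (DenseFamilies s1 s2) ∧ S1H H (OpenCovers s2) (DenseFamilies s2 s1)

/-- `Y` has the H-Menger property. -/
def HMenger {X : Type u} {Y : Type v} (H : X × unitInterval → Y)
    (s1 s2 : TopologicalSpace Y) : Prop :=
  SfinH H (OpenCovers s1) (OpenCovers s2) ∧ SfinH H (OpenCovers s2) (OpenCovers s1)

/-- `Y` has the H-almost Menger property. -/
def HAlmostMenger {X : Type u} {Y : Type v} (H : X × unitInterval → Y)
    (s1 s2 : TopologicalSpace Y) : Prop :=
  SfinH H (OpenCovers s1) (ClosureCovers s1 s2) ∧ SfinH H (OpenCovers s2) (ClosureCovers s2 s1)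

/-- `Y` has the H-weak Menger property. -/
def HWeakMenger {X : Type u} {Y : Type v} (H : X × unitInterval → Y)
    (s1 s2 : TopologicalSpace Y) : Prop :=
  SfinH H (OpenCovers s1) (DenseFamilies s1 s2) ∧ SfinH H (OpenCovers s2) (DenseFamilies s2 s1)

/-- `X` has the PH-Rothberger property. -/
def PHRothberger {X : Type u} (H : unitInterval × unitInterval → X)
    (s1 s2 : TopologicalSpace X) : Prop :=
  S1PH H (OpenCovers s1) (OpenCovers s2) ∧ S1PH H (OpenCovers s2) (OpenCovers s1)

/-- `X` has the PH-almost Rothberger property. -/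
def PHAlmostRothberger {X : Type u} (H : unitInterval × unitInterval → X)
    (s1 s2 : TopologicalSpace X) : Prop :=
  S1PH H (OpenCovers s1) (ClosureCovers s1 s2) ∧ S1PH H (OpenCovers s2) (ClosureCovers s2 s1)

/-- `X` has the PH-weak Rothberger property. -/
def PHWeakRothberger {X : Type u} (H : unitInterval × unitInterval → X)
    (s1 s2 : TopologicalSpace X) : Prop :=
  S1PH H (OpenCovers s1) (DenseFamilies s1 s2) ∧ S1PH H (OpenCovers s2) (DenseFamilies s2 s1)

/-- `X` has the PH-Menger property. -/
def PHMenger {X : Type u} (H : unitInterval × unitInterval → X)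
    (s1 s2 : TopologicalSpace X) : Prop :=
  SfinPH H (OpenCovers s1) (OpenCovers s2) ∧ SfinPH H (OpenCovers s2) (OpenCovers s1)

/-- `X` has the PH-almost Menger property. -/
def PHAlmostMenger {X : Type u} (H : unitInterval × unitInterval → X)
    (s1 s2 : TopologicalSpace X) : Prop :=
  SfinPH H (OpenCovers s1) (ClosureCovers s1 s2) ∧ SfinPH H (OpenCovers s2) (ClosureCovers s2 s1)

/-- `X` has the PH-weak Menger property. -/
def PHWeakMenger {X : Type u} (H : unitInterval × unitInterval → X)
    (s1 s2 : TopologicalSpace X) : Prop :=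
  SfinPH H (OpenCovers s1) (DenseFamilies s1 s2) ∧ SfinPH H (OpenCovers s2) (DenseFamilies s2 s1)

/-- `s1` is regular with respect to `s2`. -/
def RegularWRT {Y : Type v} (s1 s2 : TopologicalSpace Y) : Prop :=
  ∀ (x : Y) (P : Set Y), IsClosed[s1] P → x ∉ P →
    ∃ U V : Set Y, IsOpen[s1] U ∧ IsOpen[s2] V ∧ x ∈ U ∧ P ⊆ V ∧ U ∩ V = ∅

/-- `(Y, s1, s2)` is pairwise T1. -/
def PairwiseT1 {Y : Type v} (s1 s2 : TopologicalSpace Y) : Prop :=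
  ∀ x y : Y, x ≠ y →
    ∃ U V : Set Y, IsOpen[s1] U ∧ IsOpen[s2] V ∧ x ∈ U ∧ y ∉ U ∧ y ∈ V ∧ x ∉ V

/-- `(Y, s1, s2)` is pairwise regular. -/
def PairwiseRegular {Y : Type v} (s1 s2 : TopologicalSpace Y) : Prop :=
  RegularWRT s1 s2 ∧ RegularWRT s2 s1

/-- `(Y, s1, s2)` is pairwise T3. -/
def PairwiseT3 {Y : Type v} (s1 s2 : TopologicalSpace Y) : Prop :=
  PairwiseRegular s1 s2 ∧ PairwiseT1 s1 s2

/-- `s1` is locally compact with respect to `s2`. -/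
def LocallyCompactWRT {Y : Type v} (s1 s2 : TopologicalSpace Y) : Prop :=
  ∀ x : Y, ∃ N : Set Y, N ∈ @nhds Y s2 x ∧ @IsCompact Y s1 N

/-- `(Y, s1, s2)` is pairwise locally compact. -/
def PairwiseLocallyCompact {Y : Type v} (s1 s2 : TopologicalSpace Y) : Prop :=
  LocallyCompactWRT s1 s2 ∧ LocallyCompactWRT s2 s1

/-- A topological space is a P-space if the union of countably many closed sets is closed. -/
def IsPSpaceTop {Y : Type v} (s : TopologicalSpace Y) : Prop :=
  ∀ C : ℕ → Set Y, (∀ n, IsClosed[s] (C n)) → IsClosed[s] (⋃ n, C n)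

/-- `(Y, s1, s2)` is a pairwise P-space. -/
def PairwisePSpace {Y : Type v} (s1 s2 : TopologicalSpace Y) : Prop :=
  IsPSpaceTop s1 ∧ IsPSpaceTop s2


/-!
A compact subset of a T1 P-space is finite: any countably infinite subset of it would be closed,
hence compact, and discrete, since all of its subsets are countable and therefore closed. So in a
pairwise T1, pairwise locally compact, pairwise P-space every point has a finite neighbourhood in
either topology, so both topologies are discrete. Then they coincide and every closure is trivial,
so a family of open sets with dense union is already a cover.
-/

section PSpace

variable {Z : Type*} [t : TopologicalSpace Z] [T1Space Z]

theorem IsPSpaceTop.isClosed_of_countable (hP : IsPSpaceTop t) {C : Set Z} (hC : C.Countable) :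
    IsClosed C := by
  rcases C.eq_empty_or_nonempty with rfl | hne
  · exact isClosed_empty
  obtain ⟨c, rfl⟩ := hC.exists_eq_range hne
  simpa only [iUnion_singleton_eq_range] using hP _ fun n => isClosed_singleton

theorem IsPSpaceTop.finite_of_isCompact (hP : IsPSpaceTop t) {N : Set Z} (hN : IsCompact N) :
    N.Finite := by
  by_contra hinf
  obtain ⟨C, hCN, hCc, hCinf⟩ := Set.Infinite.exists_subset_countable_infinite hinf
  have hdisc : IsDiscrete C := isDiscrete_iff_forall_mem_exists_isClosed.2 fun s hs =>
    ⟨s, hP.isClosed_of_countable (hCc.mono hs), inter_eq_left.2 hs⟩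
  exact hCinf ((hN.of_isClosed_subset (hP.isClosed_of_countable hCc) hCN).finite hdisc)

end PSpace

section Bitopological

variable {Y : Type*} {s1 s2 : TopologicalSpace Y}

theorem PairwiseT1.symm (h : PairwiseT1 s1 s2) : PairwiseT1 s2 s1 := by
  intro x y hxy
  obtain ⟨U, V, hU, hV, hyU, hxU, hxV, hyV⟩ := h y x hxy.symm
  exact ⟨V, U, hV, hU, hxV, hyV, hyU, hxU⟩

theorem PairwiseT1.t1Space_left (h : PairwiseT1 s1 s2) : @T1Space Y s1 :=
  @t1Space_iff_exists_open Y s1 |>.2 fun x y hxy => by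
    obtain ⟨U, -, hU, -, hxU, hyU, -⟩ := h x y hxy
    exact ⟨U, hU, hxU, hyU⟩

theorem LocallyCompactWRT.discreteTopology (hLC : LocallyCompactWRT s1 s2)
    (hT1 : PairwiseT1 s1 s2) (hP : IsPSpaceTop s1) : @DiscreteTopology Y s2 := by
  refine @discreteTopology_iff_isOpen_singleton Y s2 |>.2 fun y => ?_
  obtain ⟨N, hN, hNc⟩ := hLC y
  exact @isOpen_singleton_of_finite_mem_nhds Y s2 hT1.symm.t1Space_left y N hN
    (@IsPSpaceTop.finite_of_isCompact Y s1 hT1.t1Space_left hP N hNc)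

theorem denseFamilies_bot (s : TopologicalSpace Y) : DenseFamilies s ⊥ = OpenCovers s := by
  have hdisc : @DiscreteTopology Y ⊥ := @DiscreteTopology.mk Y ⊥ rfl
  ext 𝒰
  simp only [DenseFamilies, OpenCovers, mem_ofPred_eq, @closure_discrete Y ⊥ hdisc]

end Bitopological

theorem hMenger_iff_hWeakMenger_general {X : Type u} {Y : Type v}
    (s1 s2 : TopologicalSpace Y)
    (H : X × unitInterval → Y)
    (hT3 : PairwiseT3 s1 s2) (hLC : PairwiseLocallyCompact s1 s2)
    (hP : PairwisePSpace s1 s2) :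
    HMenger H s1 s2 ↔ HWeakMenger H s1 s2 := by
  obtain ⟨-, hT1⟩ := hT3
  have h2 : s2 = ⊥ := (hLC.1.discreteTopology hT1 hP.1).eq_bot
  have h1 : s1 = ⊥ := (hLC.2.discreteTopology hT1.symm hP.2).eq_bot
  subst h1 h2
  simp only [HMenger, HWeakMenger, denseFamilies_bot]

theorem hMenger_iff_hWeakMenger {X : Type u} {Y : Type v}
    (t1 t2 : TopologicalSpace X) (s1 s2 : TopologicalSpace Y)
    (f : X → X) (g : Y → Y) (F : X → Y)
    (hf : PairwiseContinuous t1 t2 t1 t2 f) (hg : PairwiseContinuous s1 s2 s1 s2 g)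
    (hF : PairwiseContinuous t1 t2 s1 s2 F)
    (H : X × unitInterval → Y) (hH : IsBTDSHomotopy t1 t2 s1 s2 f g F H)
    (hT3 : PairwiseT3 s1 s2) (hLC : PairwiseLocallyCompact s1 s2)
    (hP : PairwisePSpace s1 s2) :
    HMenger H s1 s2 ↔ HWeakMenger H s1 s2 :=
  hMenger_iff_hWeakMenger_general s1 s2 H hT3 hLC hP
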